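/- Let (A, μ, α) be a hom-associative algebra over a field k, let (M, β, ·) be a hom-bimodule over it, and let θ ∈ C³_{α,β}(A,M) be a Hochschild 3-cocycle, i.e. δ_{α,β}(θ) = 0. Set A₀ := A, A₁ := M, d := 0, μ₂(a,b) := μ(a,b), μ₂(a,m) := a·m, μ₂(m,a) := m·a, μ₃ := θ, α₀ := α, α₁ := β. Then (A₁ →d A₀, μ₂, μ₃, α₀, α₁) is a skeletal 2-term HA∞-algebra, i.e. all the defining axioms of a 2-term HA∞-algebra hold for this data. -/

import Mathlib

/-- A 2-term HA∞-algebra `(A₁ →d A₀, μ₂, μ₃, α₀, α₁)` over a field `k`.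
`m00`, `m01`, `m10` are the three components of the bilinear map `μ₂`,
`m3` is the trilinear map `μ₃`, and `a0`, `a1` are the linear maps `α₀`, `α₁`. -/
structure TwoTermHA (k : Type*) [Field k] (A0 A1 : Type*)
    [AddCommGroup A0] [Module k A0] [AddCommGroup A1] [Module k A1] where
  d : A1 →ₗ[k] A0
  m00 : A0 →ₗ[k] A0 →ₗ[k] A0
  m01 : A0 →ₗ[k] A1 →ₗ[k] A1
  m10 : A1 →ₗ[k] A0 →ₗ[k] A1
  m3 : A0 →ₗ[k] A0 →ₗ[k] A0 →ₗ[k] A1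
  a0 : A0 →ₗ[k] A0
  a1 : A1 →ₗ[k] A1
  comm_d : ∀ m, a0 (d m) = d (a1 m)
  comm_m3 : ∀ a b c, a1 (m3 a b c) = m3 (a0 a) (a0 b) (a0 c)
  axb : ∀ a b, a0 (m00 a b) = m00 (a0 a) (a0 b)
  axc : ∀ a m, a1 (m01 a m) = m01 (a0 a) (a1 m)
  axd : ∀ m a, a1 (m10 m a) = m10 (a1 m) (a0 a)
  axe : ∀ a m, d (m01 a m) = m00 a (d m)
  axf : ∀ m a, d (m10 m a) = m00 (d m) a
  axg : ∀ m n, m01 (d m) n = m10 m (d n)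
  axh : ∀ a b c, d (m3 a b c) = m00 (m00 a b) (a0 c) - m00 (a0 a) (m00 b c)
  axi1 : ∀ a b m, m3 a b (d m) = m01 (m00 a b) (a1 m) - m01 (a0 a) (m01 b m)
  axi2 : ∀ a m c, m3 a (d m) c = m10 (m01 a m) (a0 c) - m01 (a0 a) (m10 m c)
  axi3 : ∀ m b c, m3 (d m) b c = m10 (m10 m b) (a0 c) - m10 (a1 m) (m00 b c)
  axj : ∀ a b c e,
    m3 (m00 a b) (a0 c) (a0 e) - m3 (a0 a) (m00 b c) (a0 e)
        + m3 (a0 a) (a0 b) (m00 c e)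
      = m10 (m3 a b c) (a0 (a0 e)) + m01 (a0 (a0 a)) (m3 b c e)

/-!
With `d = 0` the axioms (e)–(g) hold trivially, (h) and (i1)–(i3) say that hom-associativity and
the hom-bimodule axioms hold, and (j) is the cocycle condition `δ_{α,β} θ = 0` with its five terms
regrouped.
-/

namespace TwoTermHA

variable {k A M : Type*} [Field k] [AddCommGroup A] [Module k A] [AddCommGroup M] [Module k M]

def ofHochschildCocycle
    (μ : A →ₗ[k] A →ₗ[k] A) (αA : A →ₗ[k] A)
    (actL : A →ₗ[k] M →ₗ[k] M) (actR : M →ₗ[k] A →ₗ[k] M) (β : M →ₗ[k] M)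
    (hαμ : ∀ a b, αA (μ a b) = μ (αA a) (αA b))
    (hassoc : ∀ a b c, μ (αA a) (μ b c) = μ (μ a b) (αA c))
    (hβL : ∀ a m, β (actL a m) = actL (αA a) (β m))
    (hβR : ∀ m a, β (actR m a) = actR (β m) (αA a))
    (hbm1 : ∀ a b m, actL (αA a) (actL b m) = actL (μ a b) (β m))
    (hbm2 : ∀ a b m, actR (β m) (μ a b) = actR (actR m a) (αA b))
    (hbm3 : ∀ a b m, actL (αA a) (actR m b) = actR (actL a m) (αA b))
    (θ : A →ₗ[k] A →ₗ[k] A →ₗ[k] M)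
    (hθcompat : ∀ a b c, θ (αA a) (αA b) (αA c) = β (θ a b c))
    (hθcocycle : ∀ a b c e,
      actL (αA (αA a)) (θ b c e)
        - θ (μ a b) (αA c) (αA e)
        + θ (αA a) (μ b c) (αA e)
        - θ (αA a) (αA b) (μ c e)
        + actR (θ a b c) (αA (αA e)) = 0) :
    TwoTermHA k A M where
  d := 0
  m00 := μ
  m01 := actL
  m10 := actR
  m3 := θ
  a0 := αA
  a1 := β
  comm_d _ := by simp
  comm_m3 a b c := (hθcompat a b c).symm
  axb := hαμ
  axc := hβL
  axd := hβR
  axe _ _ := by simp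
  axf _ _ := by simp
  axg _ _ := by simp
  axh a b c := (sub_eq_zero_of_eq (hassoc a b c).symm).symm
  axi1 a b m := by simp [hbm1]
  axi2 a m c := by simp [hbm3]
  axi3 m b c := by simp [hbm2]
  axj a b c e := by linear_combination (norm := abel) -hθcocycle a b c e

end TwoTermHA

theorem cocycle_gives_skeletal
    {k A M : Type*} [Field k]
    [AddCommGroup A] [Module k A] [AddCommGroup M] [Module k M]
    (μ : A →ₗ[k] A →ₗ[k] A) (αA : A →ₗ[k] A)
    (actL : A →ₗ[k] M →ₗ[k] M) (actR : M →ₗ[k] A →ₗ[k] M) (β : M →ₗ[k] M)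
    (hαμ : ∀ a b, αA (μ a b) = μ (αA a) (αA b))
    (hassoc : ∀ a b c, μ (αA a) (μ b c) = μ (μ a b) (αA c))
    (hβL : ∀ a m, β (actL a m) = actL (αA a) (β m))
    (hβR : ∀ m a, β (actR m a) = actR (β m) (αA a))
    (hbm1 : ∀ a b m, actL (αA a) (actL b m) = actL (μ a b) (β m))
    (hbm2 : ∀ a b m, actR (β m) (μ a b) = actR (actR m a) (αA b))
    (hbm3 : ∀ a b m, actL (αA a) (actR m b) = actR (actL a m) (αA b))
    (θ : A →ₗ[k] A →ₗ[k] A →ₗ[k] M)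
    (hθcompat : ∀ a b c, θ (αA a) (αA b) (αA c) = β (θ a b c))
    (hθcocycle : ∀ a b c e,
      actL (αA (αA a)) (θ b c e)
        - θ (μ a b) (αA c) (αA e)
        + θ (αA a) (μ b c) (αA e)
        - θ (αA a) (αA b) (μ c e)
        + actR (θ a b c) (αA (αA e)) = 0) :
    ∃ T : TwoTermHA k A M,
      T.d = 0 ∧ T.m00 = μ ∧ T.m01 = actL ∧ T.m10 = actR ∧ T.m3 = θ
        ∧ T.a0 = αA ∧ T.a1 = β :=
  ⟨.ofHochschildCocycle μ αA actL actR β hαμ hassoc hβL hβR hbm1 hbm2 hbm3 θ hθcompat hθcocycle,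
    rfl, rfl, rfl, rfl, rfl, rfl, rfl⟩
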